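/- arXiv:0710.3392 — 6 statements merged into one kernel-verified Lean document; each statement's English description precedes it below -/
import Mathlib

section
/- Let A be an associative algebra and D : A → A a linear map satisfying D(ab) = a·D(b) + b·D(a) for all a, b ∈ A. Then for all a, b, c ∈ A one has [a,c]·D(b) + [b,c]·D(a) = 0, where [x,y] = xy − yx. -/
/-! Expand `D (a * b * c)` once through `(a * b) * c` and once through `a * (b * c)`: the terms
`a * b * D c` agree, and comparing the rest gives the identity. -/

theorem commutator_mul_add_commutator_mul_eq_zero_of_map_mul {A : Type*} [NonUnitalRing A]
    {D : A → A} (hD : ∀ a b : A, D (a * b) = a * D b + b * D a) (a b c : A) :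
    (a * c - c * a) * D b + (b * c - c * b) * D a = 0 := by
  have h : D (a * b * c) = D (a * (b * c)) := by rw [mul_assoc]
  rw [hD (a * b), hD a (b * c), hD a b, hD b c] at h
  linear_combination (norm := noncomm_ring) -h

/-- If `D : A → A` is `k`-linear and satisfies
`D (a*b) = a * D b + b * D a` for all `a b`, then
`[a,c] * D b + [b,c] * D a = 0` for all `a b c`. -/
theorem stmt_0 {k A : Type*} [Field k] [Ring A] [Algebra k A]
    (D : A →ₗ[k] A) (hD : ∀ a b : A, D (a * b) = a * D b + b * D a) :
    ∀ a b c : A, (a * c - c * a) * D b + (b * c - c * b) * D a = 0 :=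
  commutator_mul_add_commutator_mul_eq_zero_of_map_mul hD
end

section
/- Let A be an associative algebra and D : A → A a linear map satisfying D(ab) = a·D(b) + b·D(a) for all a, b. Then [a,b]·D(b) = 0 for all a, b ∈ A. -/
/-!
Expand `D (a * b * b)` in the two ways allowed by associativity: after cancelling the common
terms `a * b * D b` and `b * b * D a`, what remains is `b * a * D b = a * b * D b`.
-/

theorem commutator_mul_apply_eq_zero_of_map_mul {A : Type*} [NonUnitalRing A] (D : A → A)
    (hD : ∀ a b : A, D (a * b) = a * D b + b * D a) (a b : A) :
    (a * b - b * a) * D b = 0 := by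
  have hexpand : a * b * D b + b * (a * D b + b * D a) = a * (b * D b + b * D b) + b * b * D a := by
    rw [← hD, ← hD, ← hD, ← hD, mul_assoc]
  calc (a * b - b * a) * D b
      = a * (b * D b + b * D b) + b * b * D a - (a * b * D b + b * (a * D b + b * D a)) := by
        noncomm_ring
    _ = 0 := by rw [hexpand, sub_self]

/-- If `D : A → A` is `k`-linear and satisfies
`D (a*b) = a * D b + b * D a`, then `[a,b] * D b = 0` for all `a b`. -/
theorem stmt_1 {k A : Type*} [Field k] [Ring A] [Algebra k A]
    (D : A →ₗ[k] A) (hD : ∀ a b : A, D (a * b) = a * D b + b * D a) :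
    ∀ a b : A, (a * b - b * a) * D b = 0 :=
  commutator_mul_apply_eq_zero_of_map_mul D hD
end

section
/- Let A be an associative algebra with no zero divisors which is not commutative, and D : A → A a linear map with D(ab) = a·D(b) + b·D(a) for all a,b. Then D = 0. -/
/-!
Computing `D (x * (y * z)) = D ((x * y) * z)` with the product rule on both sides gives
`⁅x, z⁆ * D y + ⁅y, z⁆ * D x = 0`. Taking `y = z` shows, in a domain, that `D` kills every
element that fails to commute with something; so if `a` and `c` do not commute, `D a = 0`, and
the identity with `x = a`, `z = c` reduces to `⁅a, c⁆ * D b = 0` for every `b`.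
-/

section ProductRule

variable {A : Type*} [Ring A] {D : A → A} (hD : ∀ a b : A, D (a * b) = a * D b + b * D a)
include hD

theorem lie_mul_apply_add_lie_mul_apply_eq_zero (x y z : A) :
    ⁅x, z⁆ * D y + ⁅y, z⁆ * D x = 0 := by
  have hassoc :
      x * (y * D z + z * D y) + y * z * D x = x * y * D z + z * (x * D y + y * D x) := by
    rw [← hD, ← hD, ← hD, ← hD, mul_assoc]
  rw [Ring.lie_def, Ring.lie_def, ← sub_eq_zero.mpr hassoc]
  noncomm_ring

variable [NoZeroDivisors A]

theorem apply_eq_zero_of_lie_ne_zero {x z : A} (hxz : ⁅x, z⁆ ≠ 0) : D z = 0 := by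
  have h := lie_mul_apply_add_lie_mul_apply_eq_zero hD x z z
  rw [Ring.lie_def z, sub_self, zero_mul, add_zero] at h
  exact (mul_eq_zero.mp h).resolve_left hxz

theorem apply_eq_zero_of_not_commute {a c : A} (hac : a * c ≠ c * a) (b : A) : D b = 0 := by
  have hac' : ⁅a, c⁆ ≠ 0 := by rwa [Ring.lie_def, sub_ne_zero]
  have hca : ⁅c, a⁆ ≠ 0 := by rw [Ring.lie_def, sub_ne_zero]; exact hac.symm
  have hDa : D a = 0 := apply_eq_zero_of_lie_ne_zero hD hca
  have h := lie_mul_apply_add_lie_mul_apply_eq_zero hD a b c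
  rw [hDa, mul_zero, add_zero] at h
  exact (mul_eq_zero.mp h).resolve_left hac'

end ProductRule

/-- If `A` is an associative algebra with no zero divisors which is
not commutative, and `D : A → A` is `k`-linear with `D(ab) = a·D(b) + b·D(a)`,
then `D = 0`. -/
theorem stmt_2 {k A : Type*} [Field k] [Ring A] [Algebra k A] [NoZeroDivisors A]
    (hnc : ¬ ∀ a b : A, a * b = b * a)
    (D : A →ₗ[k] A) (hD : ∀ a b : A, D (a * b) = a * D b + b * D a) :
    D = 0 := by
  push Not at hnc
  obtain ⟨a, c, hac⟩ := hnc
  ext b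
  exact apply_eq_zero_of_not_commute hD hac b
end

section
/- Let A be a k-algebra, D, D' : A → A linear operators, and for a ∈ A write (ad a)(D) = [D, L_a] = D∘L_a − L_a∘D where L_a is left multiplication. Then for any a_1, …, a_p ∈ A (with A commutative), [⋯[[D∘D', a_1], a_2]⋯, a_p] = Σ_{I ⊆ {1,…,p}} (∏_{i∈I} ad a_i)(D) ∘ (∏_{j∉I} ad a_j)(D'). -/
/-!
The operators `ad a` are derivations of the composition product (the Leibniz rule
`[E ∘ F, a] = [E, a] ∘ F + E ∘ [F, a]`) and commute pairwise because `A` is commutative.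
Iterating the Leibniz rule over a finite set of elements distributes each `ad aᵢ` onto either
factor, which gives the sum over subsets; commutativity makes the order of the `ad aᵢ`
irrelevant, so both sides may be read as unordered products indexed by finsets.
-/

/-- The right adjoint action `(ad a)(D) = [D, L_a] = D ∘ L_a - L_a ∘ D`. -/
def adL (k : Type*) {A : Type*} [Field k] [CommRing A] [Algebra k A]
    (a : A) (D : A →ₗ[k] A) : A →ₗ[k] A :=
  D ∘ₗ LinearMap.mulLeft k a - LinearMap.mulLeft k a ∘ₗ D

section
variable {k A : Type*} [Field k] [CommRing A] [Algebra k A]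

lemma adL_add (x : A) (E F : A →ₗ[k] A) : adL k x (E + F) = adL k x E + adL k x F := by
  simp only [adL, LinearMap.add_comp, LinearMap.comp_add]
  abel

lemma adL_sum {ι : Type*} (x : A) (s : Finset ι) (E : ι → A →ₗ[k] A) :
    adL k x (∑ i ∈ s, E i) = ∑ i ∈ s, adL k x (E i) :=
  map_sum (AddMonoidHom.mk' (adL k x) (adL_add x)) E s

lemma adL_comp (x : A) (E F : A →ₗ[k] A) :
    adL k x (E ∘ₗ F) = adL k x E ∘ₗ F + E ∘ₗ adL k x F := by
  ext b
  simp only [adL, LinearMap.sub_apply, LinearMap.comp_apply, LinearMap.add_apply,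
    LinearMap.mulLeft_apply, map_sub]
  abel

lemma adL_left_comm (x y : A) (E : A →ₗ[k] A) :
    adL k x (adL k y E) = adL k y (adL k x E) := by
  ext b
  simp only [adL, LinearMap.sub_apply, LinearMap.comp_apply, LinearMap.mulLeft_apply,
    map_sub, mul_left_comm]
  abel

instance : LeftCommutative (adL k : A → (A →ₗ[k] A) → A →ₗ[k] A) :=
  ⟨adL_left_comm⟩

/-- `adProd a I E = (∏_{i ∈ I} ad aᵢ)(E)`. -/
def adProd {ι : Type*} (a : ι → A) (I : Finset ι) (E : A →ₗ[k] A) : A →ₗ[k] A :=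
  (I.val.map a).foldr (adL k) E

variable {ι : Type*} (a : ι → A)

lemma adProd_insert [DecidableEq ι] {i : ι} {I : Finset ι} (hi : i ∉ I) (E : A →ₗ[k] A) :
    adProd a (insert i I) E = adL k (a i) (adProd a I E) := by
  simp only [adProd, Finset.insert_val_of_notMem hi, Multiset.map_cons, Multiset.foldr_cons]

lemma adProd_eq_foldr_sort [LinearOrder ι] (I : Finset ι) (E : A →ₗ[k] A) :
    adProd a I E = ((I.sort (· ≤ ·)).map a).foldr (adL k) E := by
  rw [adProd, ← Multiset.coe_foldr, ← Multiset.map_coe, Finset.sort_eq]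

lemma adProd_univ_fin {p : ℕ} (a : Fin p → A) (E : A →ₗ[k] A) :
    adProd a Finset.univ E = (List.ofFn a).foldl (fun E x => adL k x E) E := by
  rw [adProd, Fin.univ_val_map, ← Multiset.coe_reverse, Multiset.coe_foldr,
    List.foldl_eq_foldr_reverse]

theorem adProd_comp [DecidableEq ι] (s : Finset ι) (D D' : A →ₗ[k] A) :
    adProd a s (D ∘ₗ D') = ∑ I ∈ s.powerset, adProd a I D ∘ₗ adProd a (s \ I) D' := by
  induction s using Finset.induction_on with
  | empty => simp [adProd]
  | insert i s hi ih =>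
    rw [adProd_insert a hi, ih, adL_sum, Finset.sum_powerset_insert hi, add_comm,
      ← Finset.sum_add_distrib]
    refine Finset.sum_congr rfl fun I hI => ?_
    have hiI : i ∉ I := fun h => hi (Finset.mem_powerset.mp hI h)
    rw [adL_comp, Finset.insert_sdiff_of_notMem _ hiI, Finset.insert_sdiff_insert,
      Finset.sdiff_insert_of_notMem hi, adProd_insert a hiI,
      adProd_insert a (fun h => hi (Finset.mem_sdiff.mp h).1)]

end

/-- for a commutative algebra `A` and operators `D, D'`,
`[⋯[[D∘D', a₁], a₂]⋯, a_p] = Σ_{I ⊆ {1,…,p}} (∏_{i∈I} ad a_i)(D) ∘ (∏_{j∉I} ad a_j)(D')`,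
with products of the commuting operators `ad a_i` taken in increasing index order. -/
theorem stmt_7 {k A : Type*} [Field k] [CommRing A] [Algebra k A]
    (D D' : A →ₗ[k] A) (p : ℕ) (a : Fin p → A) :
    (List.ofFn a).foldl (fun E x => adL k x E) (D ∘ₗ D') =
      ∑ I : Finset (Fin p),
        (((I.sort (· ≤ ·)).map a).foldr (adL k) D) ∘ₗ
          (((Iᶜ.sort (· ≤ ·)).map a).foldr (adL k) D') := by
  simp only [← adProd_univ_fin, ← adProd_eq_foldr_sort, Finset.compl_eq_univ_sdiff]
  rw [adProd_comp, Finset.powerset_univ]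
end

section
/- Let A be an associative algebra, M an A-bimodule, and ∇_ℓ : M → Ω¹A ⊗_A M a left connection (right A-linear, with ∇_ℓ(am) = a∇_ℓ(m) + da⊗m). Then a left connection on an A-bimodule M exists if M is a projective A⊗A^op-module; conversely if a connection (∇_ℓ, ∇_r) exists then M is projective as an A⊗A^op-module. -/
open TensorProduct

section

variable {k A M : Type} [Field k] [Ring A] [Algebra k A]
  [AddCommGroup M] [Module k M] [Module A M] [Module Aᵐᵒᵖ M]
  [IsScalarTower k A M] [IsScalarTower k Aᵐᵒᵖ M] [SMulCommClass A Aᵐᵒᵖ M]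
  [SMulCommClass A k M] [SMulCommClass Aᵐᵒᵖ k M]

/-- The left action map `A ⊗ M → M`, `a ⊗ m ↦ a • m`.  Its kernel is the
standard model of `Ω¹A ⊗_A M` inside `A ⊗ₖ M`. -/
noncomputable def actL (k A M : Type) [Field k] [Ring A] [Algebra k A]
    [AddCommGroup M] [Module k M] [Module A M]
    [IsScalarTower k A M] [SMulCommClass A k M] : A ⊗[k] M →ₗ[k] M :=
  TensorProduct.lift (LinearMap.mk₂ k (fun a m => a • m)
    (fun a a' m => add_smul a a' m)
    (fun c a m => smul_assoc c a m)
    (fun a m m' => smul_add a m m')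
    (fun c a m => smul_comm a c m |>.symm ▸ rfl))

/-- The right action map `M ⊗ A → M`, `m ⊗ b ↦ m • b = op b • m`.  Its kernel is
the standard model of `M ⊗_A Ω¹A` inside `M ⊗ₖ A`. -/
noncomputable def actR (k A M : Type) [Field k] [Ring A] [Algebra k A]
    [AddCommGroup M] [Module k M] [Module Aᵐᵒᵖ M]
    [IsScalarTower k Aᵐᵒᵖ M] [SMulCommClass Aᵐᵒᵖ k M] : M ⊗[k] A →ₗ[k] M :=
  TensorProduct.lift (LinearMap.mk₂ k (fun m b => MulOpposite.op b • m)
    (fun m m' b => smul_add (MulOpposite.op b) m m')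
    (fun c m b => smul_comm (MulOpposite.op b) c m)
    (fun m b b' => by
      show MulOpposite.op (b + b') • m = MulOpposite.op b • m + MulOpposite.op b' • m
      rw [MulOpposite.op_add, add_smul])
    (fun c m b => by
      show MulOpposite.op (c • b) • m = c • MulOpposite.op b • m
      rw [MulOpposite.op_smul, smul_assoc]))

/-- The left `A`-action of `a` on the first factor of `A ⊗ M`. -/
noncomputable def lmul₁ (k A M : Type) [Field k] [Ring A] [Algebra k A]
    [AddCommGroup M] [Module k M] (a : A) : A ⊗[k] M →ₗ[k] A ⊗[k] M :=
  LinearMap.rTensor M (LinearMap.mulLeft k a)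

/-- The right `A`-action of `b` on the second factor of `M ⊗ A`. -/
noncomputable def rmul₂ (k A M : Type) [Field k] [Ring A] [Algebra k A]
    [AddCommGroup M] [Module k M] (b : A) : M ⊗[k] A →ₗ[k] M ⊗[k] A :=
  LinearMap.lTensor M (LinearMap.mulRight k b)

/-- The right action of `b` on the `M`-factor of `A ⊗ M`. -/
noncomputable def rop₂ (k A M : Type) [Field k] [Ring A] [Algebra k A]
    [AddCommGroup M] [Module k M] [Module Aᵐᵒᵖ M] [SMulCommClass Aᵐᵒᵖ k M]
    (b : A) : A ⊗[k] M →ₗ[k] A ⊗[k] M :=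
  LinearMap.lTensor A
    { toFun := fun m => MulOpposite.op b • m
      map_add' := fun m m' => smul_add _ m m'
      map_smul' := fun c m => smul_comm (MulOpposite.op b) c m }

/-- The left action of `a` on the `M`-factor of `M ⊗ A`. -/
noncomputable def lsm₁ (k A M : Type) [Field k] [Ring A] [Algebra k A]
    [AddCommGroup M] [Module k M] [Module A M] [SMulCommClass A k M]
    (a : A) : M ⊗[k] A →ₗ[k] M ⊗[k] A :=
  LinearMap.rTensor A
    { toFun := fun m => a • m
      map_add' := fun m m' => smul_add a m m'
      map_smul' := fun c m => smul_comm a c m }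

/-- `∇ℓ : M → Ω¹A ⊗_A M ⊆ A ⊗ₖ M` is a left connection. -/
noncomputable def IsLeftConn (nl : M →ₗ[k] A ⊗[k] M) : Prop :=
  (∀ m : M, actL k A M (nl m) = 0) ∧
  (∀ (b : A) (m : M), nl (MulOpposite.op b • m) = rop₂ k A M b (nl m)) ∧
  (∀ (a : A) (m : M),
    nl (a • m) = lmul₁ k A M a (nl m) + a ⊗ₜ m - 1 ⊗ₜ (a • m))

/-- `∇r : M → M ⊗_A Ω¹A ⊆ M ⊗ₖ A` is a right connection. -/
noncomputable def IsRightConn (nr : M →ₗ[k] M ⊗[k] A) : Prop :=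
  (∀ m : M, actR k A M (nr m) = 0) ∧
  (∀ (a : A) (m : M), nr (a • m) = lsm₁ k A M a (nr m)) ∧
  (∀ (b : A) (m : M),
    nr (MulOpposite.op b • m)
      = rmul₂ k A M b (nr m) + m ⊗ₜ b - (MulOpposite.op b • m) ⊗ₜ 1)


/-! A left connection is the same thing as a bimodule splitting `m ↦ 1 ⊗ m + ∇ℓ m` of the
multiplication `A ⊗ M → M`, and likewise on the right. Since `k` is a field, `Aᵉ ⊗ₖ M` is a free
`Aᵉ`-module, so `M` is `Aᵉ`-projective iff the action map `Aᵉ ⊗ₖ M → M` has an `Aᵉ`-linear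
section `σ`. Letting the `Aᵐᵒᵖ`-factor of `σ m` act on `M` turns `σ` into a left splitting.
Conversely, left and right splittings `s`, `s'` give `(id ⊗ s') ∘ s : M → A ⊗ M ⊗ A ≅ Aᵉ ⊗ M`,
which is an `Aᵉ`-linear section of the action map. -/

open MulOpposite

section TensorAlgebraModule

variable {R B C N P : Type*} [CommSemiring R] [Semiring B] [Semiring C] [Algebra R B]
  [Algebra R C] [AddCommMonoid N] [Module R N]

attribute [local instance] TensorProduct.Algebra.module in
theorem TensorProduct.Algebra.isScalarTower [Module B N] [Module C N] [IsScalarTower R B N]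
    [IsScalarTower R C N] [SMulCommClass B C N] : IsScalarTower R (B ⊗[R] C) N := by
  refine ⟨fun c r n => ?_⟩
  induction r using TensorProduct.induction_on with
  | zero => simp
  | tmul b c' => rw [smul_tmul', smul_def, smul_def, smul_assoc]
  | add r r' hr hr' => rw [smul_add, add_smul, add_smul, hr, hr', smul_add]

def LinearMap.extendScalarsOfTensor [Module (B ⊗[R] C) N] [AddCommMonoid P] [Module R P]
    [Module (B ⊗[R] C) P] (f : N →ₗ[R] P)
    (hB : ∀ (b : B) n, f ((b ⊗ₜ[R] (1 : C)) • n) = (b ⊗ₜ[R] (1 : C)) • f n)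
    (hC : ∀ (c : C) n, f (((1 : B) ⊗ₜ[R] c) • n) = ((1 : B) ⊗ₜ[R] c) • f n) :
    N →ₗ[B ⊗[R] C] P where
  toFun := f
  map_add' := f.map_add
  map_smul' r n := by
    rw [RingHom.id_apply]
    induction r using TensorProduct.induction_on with
    | zero => simp
    | tmul b c =>
      have hbc : b ⊗ₜ[R] c = (b ⊗ₜ[R] (1 : C)) * ((1 : B) ⊗ₜ[R] c) := by simp
      rw [hbc, mul_smul, mul_smul, hB, hC]
    | add r r' hr hr' => rw [add_smul, add_smul, map_add, hr, hr']

end TensorAlgebraModule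

section ActionMap

variable {R S N : Type*} [CommSemiring R] [Semiring S] [Algebra R S] [AddCommMonoid N]
  [Module R N] [Module S N] [IsScalarTower R S N]

variable (R S N) in
noncomputable def actionMap : S ⊗[R] N →ₗ[S] N :=
  AlgebraTensorModule.lift (LinearMap.toSpanSingleton S (N →ₗ[R] N) LinearMap.id)

@[simp] lemma actionMap_tmul (s : S) (n : N) : actionMap R S N (s ⊗ₜ n) = s • n := by
  simp [actionMap]

lemma actionMap_surjective : Function.Surjective (actionMap R S N) :=
  fun n => ⟨1 ⊗ₜ n, by simp⟩

end ActionMap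

section TensorRearrangements

variable {N : Type} [AddCommGroup N] [Module k N]

@[simp] lemma actL_tmul [Module A N] [IsScalarTower k A N] [SMulCommClass A k N] (a : A)
    (n : N) : actL k A N (a ⊗ₜ n) = a • n := by
  simp [actL]

@[simp] lemma actR_tmul [Module Aᵐᵒᵖ N] [IsScalarTower k Aᵐᵒᵖ N] [SMulCommClass Aᵐᵒᵖ k N]
    (n : N) (b : A) : actR k A N (n ⊗ₜ b) = op b • n := by
  simp [actR]

@[simp] lemma lmul₁_tmul (a a' : A) (n : N) : lmul₁ k A N a (a' ⊗ₜ n) = (a * a') ⊗ₜ n := by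
  simp [lmul₁]

@[simp] lemma rmul₂_tmul (b c : A) (n : N) : rmul₂ k A N b (n ⊗ₜ c) = n ⊗ₜ (c * b) := by
  simp [rmul₂]

@[simp] lemma rop₂_tmul [Module Aᵐᵒᵖ N] [SMulCommClass Aᵐᵒᵖ k N] (b a : A) (n : N) :
    rop₂ k A N b (a ⊗ₜ n) = a ⊗ₜ (op b • n) := by
  simp [rop₂]

@[simp] lemma lsm₁_tmul [Module A N] [SMulCommClass A k N] (a b : A) (n : N) :
    lsm₁ k A N a (n ⊗ₜ b) = (a • n) ⊗ₜ b := by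
  simp [lsm₁]

section AbsorbOp

variable [Module Aᵐᵒᵖ N] [IsScalarTower k Aᵐᵒᵖ N] [SMulCommClass Aᵐᵒᵖ k N]

noncomputable def absorbOp : (A ⊗[k] Aᵐᵒᵖ) ⊗[k] N →ₗ[k] A ⊗[k] N :=
  LinearMap.lTensor A (actL k Aᵐᵒᵖ N) ∘ₗ (TensorProduct.assoc k A Aᵐᵒᵖ N).toLinearMap

@[simp] lemma absorbOp_tmul (a : A) (b : Aᵐᵒᵖ) (n : N) :
    absorbOp ((a ⊗ₜ[k] b) ⊗ₜ[k] n) = a ⊗ₜ (b • n) := by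
  simp [absorbOp]

lemma absorbOp_tmul_one_smul (a : A) (x : (A ⊗[k] Aᵐᵒᵖ) ⊗[k] N) :
    absorbOp ((a ⊗ₜ[k] (1 : Aᵐᵒᵖ)) • x) = lmul₁ k A N a (absorbOp x) := by
  induction x using TensorProduct.induction_on with
  | zero => simp
  | tmul r n =>
    induction r using TensorProduct.induction_on with
    | zero => simp
    | tmul a' b => simp [smul_tmul']
    | add r r' hr hr' => simp_all [add_tmul, smul_tmul']
  | add x y hx hy => simp_all

lemma absorbOp_one_tmul_smul (b : A) (x : (A ⊗[k] Aᵐᵒᵖ) ⊗[k] N) :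
    absorbOp (((1 : A) ⊗ₜ[k] op b) • x) = rop₂ k A N b (absorbOp x) := by
  induction x using TensorProduct.induction_on with
  | zero => simp
  | tmul r n =>
    induction r using TensorProduct.induction_on with
    | zero => simp
    | tmul a b' => simp [smul_tmul', mul_smul]
    | add r r' hr hr' => simp_all [add_tmul, smul_tmul']
  | add x y hx hy => simp_all

end AbsorbOp

/-- `a ⊗ n ↦ (a ⊗ op b) ⊗ n'` when `s n = n' ⊗ b`. -/
noncomputable def extractOp (s : N →ₗ[k] N ⊗[k] A) : A ⊗[k] N →ₗ[k] (A ⊗[k] Aᵐᵒᵖ) ⊗[k] N :=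
  (TensorProduct.assoc k A Aᵐᵒᵖ N).symm.toLinearMap ∘ₗ LinearMap.lTensor A
    ((TensorProduct.comm k N Aᵐᵒᵖ).toLinearMap ∘ₗ
      LinearMap.lTensor N (MulOpposite.opLinearEquiv k).toLinearMap ∘ₗ s)

lemma extractOp_lmul₁ (s : N →ₗ[k] N ⊗[k] A) (a : A) (x : A ⊗[k] N) :
    extractOp s (lmul₁ k A N a x) = (a ⊗ₜ[k] (1 : Aᵐᵒᵖ)) • extractOp s x := by
  induction x using TensorProduct.induction_on with
  | zero => simp
  | tmul a' n =>
    simp only [extractOp, lmul₁_tmul, LinearMap.comp_apply, LinearMap.lTensor_tmul]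
    induction s n using TensorProduct.induction_on with
    | zero => simp
    | tmul n' c => simp [smul_tmul']
    | add y z hy hz => simp_all [tmul_add]
  | add x y hx hy => simp_all

lemma extractOp_rop₂ [Module Aᵐᵒᵖ N] [SMulCommClass Aᵐᵒᵖ k N] {s : N →ₗ[k] N ⊗[k] A}
    (hs : ∀ (b : A) n, s (op b • n) = rmul₂ k A N b (s n)) (b : A) (x : A ⊗[k] N) :
    extractOp s (rop₂ k A N b x) = ((1 : A) ⊗ₜ[k] op b) • extractOp s x := by
  induction x using TensorProduct.induction_on with
  | zero => simp
  | tmul a n =>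
    simp only [extractOp, rop₂_tmul, LinearMap.comp_apply, LinearMap.lTensor_tmul, hs]
    induction s n using TensorProduct.induction_on with
    | zero => simp
    | tmul n' c => simp [smul_tmul']
    | add y z hy hz => simp_all [tmul_add]
  | add x y hx hy => simp_all

end TensorRearrangements

structure IsLeftSplitting (s : M →ₗ[k] A ⊗[k] M) : Prop where
  actL_apply : ∀ m, actL k A M (s m) = m
  map_smul : ∀ (a : A) m, s (a • m) = lmul₁ k A M a (s m)
  map_op_smul : ∀ (b : A) m, s (op b • m) = rop₂ k A M b (s m)

structure IsRightSplitting (s : M →ₗ[k] M ⊗[k] A) : Prop where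
  actR_apply : ∀ m, actR k A M (s m) = m
  map_smul : ∀ (a : A) m, s (a • m) = lsm₁ k A M a (s m)
  map_op_smul : ∀ (b : A) m, s (op b • m) = rmul₂ k A M b (s m)

omit [IsScalarTower k Aᵐᵒᵖ M] [SMulCommClass A Aᵐᵒᵖ M] in
theorem isLeftConn_iff_isLeftSplitting (nl : M →ₗ[k] A ⊗[k] M) :
    IsLeftConn nl ↔ IsLeftSplitting (TensorProduct.mk k A M 1 + nl) := by
  constructor
  · rintro ⟨hact, hop, hsmul⟩
    refine ⟨fun m => ?_, fun a m => ?_, fun b m => ?_⟩ <;>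
      simp [hact, hop, hsmul, add_comm]
  · rintro ⟨hact, hsmul, hop⟩
    refine ⟨fun m => ?_, fun b m => ?_, fun a m => ?_⟩
    · simpa using hact m
    · simpa using hop b m
    · rw [eq_sub_iff_add_eq]
      simpa [add_comm] using hsmul a m

omit [IsScalarTower k A M] [SMulCommClass A Aᵐᵒᵖ M] in
theorem isRightConn_iff_isRightSplitting (nr : M →ₗ[k] M ⊗[k] A) :
    IsRightConn nr ↔ IsRightSplitting ((TensorProduct.mk k M A).flip 1 + nr) := by
  constructor
  · rintro ⟨hact, hsmul, hop⟩
    refine ⟨fun m => ?_, fun a m => ?_, fun b m => ?_⟩ <;>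
      simp [hact, hop, hsmul, add_comm]
  · rintro ⟨hact, hsmul, hop⟩
    refine ⟨fun m => ?_, fun a m => ?_, fun b m => ?_⟩
    · simpa using hact m
    · simpa using hsmul a m
    · rw [eq_sub_iff_add_eq]
      simpa [add_comm] using hop b m

section Bimodule

variable [Module (A ⊗[k] Aᵐᵒᵖ) M] [IsScalarTower k (A ⊗[k] Aᵐᵒᵖ) M]
  (hsm : ∀ (a : A) (b : Aᵐᵒᵖ) (m : M), (a ⊗ₜ[k] b) • m = a • b • m)
include hsm
omit [SMulCommClass A Aᵐᵒᵖ M]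

lemma actL_absorbOp (x : (A ⊗[k] Aᵐᵒᵖ) ⊗[k] M) :
    actL k A M (absorbOp x) = actionMap k (A ⊗[k] Aᵐᵒᵖ) M x := by
  induction x using TensorProduct.induction_on with
  | zero => simp
  | tmul r m =>
    induction r using TensorProduct.induction_on with
    | zero => simp
    | tmul a b => simp [hsm]
    | add r r' hr hr' => simp_all [add_tmul]
  | add x y hx hy => simp_all

lemma actionMap_extractOp {s : M →ₗ[k] M ⊗[k] A} (hs : ∀ m, actR k A M (s m) = m)
    (x : A ⊗[k] M) : actionMap k (A ⊗[k] Aᵐᵒᵖ) M (extractOp s x) = actL k A M x := by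
  induction x using TensorProduct.induction_on with
  | zero => simp
  | tmul a m =>
    conv_rhs => rw [actL_tmul, ← hs m]
    simp only [extractOp, LinearMap.comp_apply, LinearMap.lTensor_tmul]
    induction s m using TensorProduct.induction_on with
    | zero => simp
    | tmul n c => simp [hsm]
    | add y z hy hz => simp_all [tmul_add, smul_add]
  | add x y hx hy => simp_all

theorem exists_isLeftSplitting_of_projective [Module.Projective (A ⊗[k] Aᵐᵒᵖ) M] :
    ∃ s : M →ₗ[k] A ⊗[k] M, IsLeftSplitting s := by
  obtain ⟨σ, hσ⟩ := Module.projective_lifting_property (actionMap k (A ⊗[k] Aᵐᵒᵖ) M)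
    LinearMap.id actionMap_surjective
  have hA (a : A) (m : M) : a • m = (a ⊗ₜ[k] (1 : Aᵐᵒᵖ)) • m := by rw [hsm, one_smul]
  have hAop (b : A) (m : M) : op b • m = ((1 : A) ⊗ₜ[k] op b) • m := by rw [hsm, one_smul]
  refine ⟨absorbOp ∘ₗ σ.restrictScalars k, ⟨fun m => ?_, fun a m => ?_, fun b m => ?_⟩⟩
  · simpa [actL_absorbOp hsm] using LinearMap.congr_fun hσ m
  · simp [hA a m, absorbOp_tmul_one_smul]
  · simp [hAop b m, absorbOp_one_tmul_smul]

theorem projective_of_isLeftSplitting_of_isRightSplitting {s : M →ₗ[k] A ⊗[k] M}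
    {s' : M →ₗ[k] M ⊗[k] A} (hs : IsLeftSplitting s) (hs' : IsRightSplitting s') :
    Module.Projective (A ⊗[k] Aᵐᵒᵖ) M := by
  let σ : M →ₗ[A ⊗[k] Aᵐᵒᵖ] (A ⊗[k] Aᵐᵒᵖ) ⊗[k] M :=
    (extractOp s' ∘ₗ s).extendScalarsOfTensor
      (fun a m => by simp [hsm, hs.map_smul, extractOp_lmul₁])
      (fun b m => by
        obtain ⟨b, rfl⟩ := op_surjective b
        simp [hsm, hs.map_op_smul, extractOp_rop₂ hs'.map_op_smul])
  refine Module.Projective.of_split σ (actionMap k _ M) (LinearMap.ext fun m => ?_)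
  simp [σ, LinearMap.extendScalarsOfTensor, actionMap_extractOp hsm hs'.actR_apply,
    hs.actL_apply]

end Bimodule

/-- a left connection on the `A`-bimodule `M` exists if `M` is
projective over `A ⊗ Aᵐᵒᵖ`; conversely, if a bimodule connection `(∇ℓ, ∇r)`
exists then `M` is projective over `A ⊗ Aᵐᵒᵖ`. -/
theorem stmt_16 :
    letI : Module (A ⊗[k] Aᵐᵒᵖ) M := TensorProduct.Algebra.module
    (Module.Projective (A ⊗[k] Aᵐᵒᵖ) M →
        ∃ nl : M →ₗ[k] A ⊗[k] M, IsLeftConn nl) ∧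
    ((∃ (nl : M →ₗ[k] A ⊗[k] M) (nr : M →ₗ[k] M ⊗[k] A),
        IsLeftConn nl ∧ IsRightConn nr) →
      Module.Projective (A ⊗[k] Aᵐᵒᵖ) M) := by
  let _ : Module (A ⊗[k] Aᵐᵒᵖ) M := TensorProduct.Algebra.module
  have : IsScalarTower k (A ⊗[k] Aᵐᵒᵖ) M := TensorProduct.Algebra.isScalarTower
  have hsm := TensorProduct.Algebra.smul_def (R := k) (A := A) (B := Aᵐᵒᵖ) (M := M)
  refine ⟨fun _ => ?_, fun ⟨nl, nr, hl, hr⟩ => ?_⟩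
  · obtain ⟨s, hs⟩ := exists_isLeftSplitting_of_projective hsm
    exact ⟨s - TensorProduct.mk k A M 1,
      (isLeftConn_iff_isLeftSplitting _).mpr (by convert hs; abel)⟩
  · exact projective_of_isLeftSplitting_of_isRightSplitting hsm
      ((isLeftConn_iff_isLeftSplitting nl).mp hl) ((isRightConn_iff_isRightSplitting nr).mp hr)

end
end

section
/- Let C be a commutative algebra object in an abelian symmetric monoidal category, and suppose the objects D_{≤n}(C) of differential operators of order ≤ n exist. Then the canonical morphism j : D_{≤n}(C) → D_{≤n+1}(C) is a monomorphism. -/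
open CategoryTheory MonoidalCategory

universe v u

/-- `catOrd M n X φ` : the morphism `φ : X ⊗ M.X ⟶ M.X` is an action of `X` on the
algebra object `M` by differential operators of order `≤ n - 1` (so `catOrd M (n+1)`
encodes "order ≤ n").  The inductive step uses
`[φ, μ] = φ ∘ (id_X ⊗ μ) − μ ∘ (id ⊗ φ) ∘ (β ⊗ id) : (X ⊗ M.X) ⊗ M.X ⟶ M.X`. -/
def catOrd {C : Type u} [Category.{v} C] [Preadditive C] [MonoidalCategory C]
    [BraidedCategory C] (M : Mon C) :
    (n : ℕ) → (X : C) → (X ⊗ M.X ⟶ M.X) → Prop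
  | 0, _X, φ => φ = 0
  | n+1, X, φ => catOrd M n (X ⊗ M.X)
      ((α_ X M.X M.X).hom ≫ (X ◁ (MonObj.mul (X := M.X))) ≫ φ
        - ((β_ X M.X).hom ▷ M.X) ≫ (α_ M.X X M.X).hom ≫ (M.X ◁ φ) ≫ (MonObj.mul (X := M.X)))

/- Pulling an action of order `≤ n` back along `g : T ⟶ D n` gives an action of order `≤ n`,
so by the uniqueness in the universal property `g` is determined by `(g ▷ M.X) ≫ ψ n`. Since
`ψ n = (j ▷ M.X) ≫ ψ (n+1)`, this action depends only on `g ≫ j`, hence `j` is mono. -/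

section

variable {C : Type u} [Category.{v} C] [MonoidalCategory C]

theorem mono_of_whiskerRight_comp_injective {A B B' : C} (ψ : B ⊗ A ⟶ A) (ψ' : B' ⊗ A ⟶ A)
    (j : B ⟶ B') (hj : ψ = (j ▷ A) ≫ ψ')
    (hinj : ∀ (T : C) (g₁ g₂ : T ⟶ B), (g₁ ▷ A) ≫ ψ = (g₂ ▷ A) ≫ ψ → g₁ = g₂) :
    Mono j where
  right_cancellation g₁ g₂ hg := hinj _ g₁ g₂ <| by
    rw [hj, ← Category.assoc, ← comp_whiskerRight, hg, comp_whiskerRight, Category.assoc]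

variable [Preadditive C] [BraidedCategory C] (M : Mon C)

def mulCommutator {X : C} (φ : X ⊗ M.X ⟶ M.X) : (X ⊗ M.X) ⊗ M.X ⟶ M.X :=
  (α_ X M.X M.X).hom ≫ (X ◁ (MonObj.mul (X := M.X))) ≫ φ
    - ((β_ X M.X).hom ▷ M.X) ≫ (α_ M.X X M.X).hom ≫ (M.X ◁ φ) ≫ (MonObj.mul (X := M.X))

theorem catOrd_succ_iff {n : ℕ} {X : C} (φ : X ⊗ M.X ⟶ M.X) :
    catOrd M (n + 1) X φ ↔ catOrd M n (X ⊗ M.X) (mulCommutator M φ) :=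
  Iff.rfl

theorem mulCommutator_whiskerRight_comp {X Y : C} (f : Y ⟶ X) (φ : X ⊗ M.X ⟶ M.X) :
    mulCommutator M ((f ▷ M.X) ≫ φ) = ((f ▷ M.X) ▷ M.X) ≫ mulCommutator M φ := by
  simp only [mulCommutator, Preadditive.comp_sub]
  congr 1
  · rw [associator_naturality_left_assoc, whisker_exchange_assoc]
  · rw [← Category.assoc ((f ▷ M.X) ▷ M.X), ← comp_whiskerRight,
      BraidedCategory.braiding_naturality_left]
    simp only [comp_whiskerRight, Category.assoc, associator_naturality_middle_assoc,
      MonoidalCategory.whiskerLeft_comp]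

variable {M} in
theorem catOrd.whiskerRight_comp {n : ℕ} {X : C} {φ : X ⊗ M.X ⟶ M.X} (h : catOrd M n X φ)
    {Y : C} (f : Y ⟶ X) : catOrd M n Y ((f ▷ M.X) ≫ φ) := by
  induction n generalizing X Y with
  | zero => simp only [catOrd] at h ⊢; rw [h, Limits.comp_zero]
  | succ n ih =>
    rw [catOrd_succ_iff, mulCommutator_whiskerRight_comp] at *
    exact ih h _

end

theorem stmt_17_general {C : Type u} [Category.{v} C] [Abelian C] [MonoidalCategory C]
    [SymmetricCategory C]
    (M : Mon C)
    (D : ℕ → C) (ψ : ∀ n : ℕ, D n ⊗ M.X ⟶ M.X)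
    (hψ : ∀ n : ℕ, catOrd M (n+1) (D n) (ψ n))
    (huniv : ∀ (n : ℕ) (X : C) (φ : X ⊗ M.X ⟶ M.X), catOrd M (n+1) X φ →
      ∃! f : X ⟶ D n, φ = (f ▷ M.X) ≫ ψ n)
    (n : ℕ) (j : D n ⟶ D (n+1)) (hj : ψ n = (j ▷ M.X) ≫ ψ (n+1)) :
    Mono j := by
  refine mono_of_whiskerRight_comp_injective (ψ n) (ψ (n+1)) j hj fun T g₁ g₂ hg => ?_
  obtain ⟨f, -, hf⟩ := huniv n T ((g₁ ▷ M.X) ≫ ψ n) ((hψ n).whiskerRight_comp g₁)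
  exact (hf g₁ rfl).trans (hf g₂ hg).symm

/-- Let `C` be a (`k`-linear) abelian symmetric monoidal category
and `M` a commutative algebra object in `C`.  Suppose the objects `D n` of
differential operators of order `≤ n` exist, i.e. each `D n` carries a universal
action `ψ n : D n ⊗ M.X ⟶ M.X` of order `≤ n` through which every action of order
`≤ n` factors uniquely.  Then the canonical morphism `j : D n ⟶ D (n+1)`
(the one compatible with the universal actions) is a monomorphism. -/
theorem stmt_17 {C : Type u} [Category.{v} C] [Abelian C] [MonoidalCategory C]
    [SymmetricCategory C]
    (M : Mon C) (hcomm : (β_ M.X M.X).hom ≫ (MonObj.mul (X := M.X)) = (MonObj.mul (X := M.X)))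
    (D : ℕ → C) (ψ : ∀ n : ℕ, D n ⊗ M.X ⟶ M.X)
    (hψ : ∀ n : ℕ, catOrd M (n+1) (D n) (ψ n))
    (huniv : ∀ (n : ℕ) (X : C) (φ : X ⊗ M.X ⟶ M.X), catOrd M (n+1) X φ →
      ∃! f : X ⟶ D n, φ = (f ▷ M.X) ≫ ψ n)
    (n : ℕ) (j : D n ⟶ D (n+1)) (hj : ψ n = (j ▷ M.X) ≫ ψ (n+1)) :
    Mono j :=
  stmt_17_general M D ψ hψ huniv n j hj
end
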